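/- Let G be a continuous semigroup on a metric space (X, d) such that every element of G is uniformly continuous. Then the set CR(G) of chain recurrent points for G is an invariant subset of X (without assuming that G is abelian). -/

import Mathlib

/-- An `(ε, g)`-chain from `a` to `b` for the semigroup `G` on a metric space `X`:
a finite sequence `a = x₀, …, xₙ = b` (with `n ≥ 1`) together with maps
`g₀, …, g_{n-1} ∈ Ĝ = G ∪ {identity}` such that `d(gᵢ(g(xᵢ)), x_{i+1}) < ε` for each `i`. -/
def EpsChain {X : Type*} [MetricSpace X] (G : Set (X → X)) (ε : ℝ) (g : X → X)
    (a b : X) : Prop :=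
  ∃ n : ℕ, 0 < n ∧ ∃ x : Fin (n + 1) → X, ∃ gs : Fin n → X → X,
    x 0 = a ∧ x (Fin.last n) = b ∧
    ∀ i : Fin n, gs i ∈ G ∪ {(id : X → X)} ∧ dist (gs i (g (x i.castSucc))) (x i.succ) < ε

/-- `x` is a chain recurrent point for `G`: for every `ε > 0` and every `g ∈ G` there is an
`(ε, g)`-chain from `x` to itself. -/
def ChainRecurrent {X : Type*} [MetricSpace X] (G : Set (X → X)) (x : X) : Prop :=
  ∀ ε > 0, ∀ g ∈ G, EpsChain G ε g x x

/-! A `(δ, h ∘ g)`-chain `yᵢ` with jump maps `kᵢ` is pushed forward by `g` to the points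
`g yᵢ` with jump maps `g ∘ kᵢ`: the jump `d(g kᵢ h (g yᵢ), g yᵢ₊₁)` is small by uniform
continuity of `g`, and `g ∘ kᵢ ∈ G` because `G` is closed under composition. Composing `h`
with `g` on the right is what makes the argument work without commutativity. -/

theorem comp_mem_union_id {X : Type*} {G : Set (X → X)} {g : X → X}
    (hcomp : ∀ g ∈ G, ∀ h ∈ G, g ∘ h ∈ G) (hg : g ∈ G) :
    ∀ k ∈ G ∪ {id}, g ∘ k ∈ G ∪ {id} := by
  rintro k (hk | rfl)
  · exact Or.inl (hcomp g hg k hk)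
  · exact Or.inl hg

theorem EpsChain.map {X : Type*} [MetricSpace X] {G : Set (X → X)}
    {φ h : X → X} {δ ε : ℝ} {a b : X}
    (hφ : ∀ x y, dist x y < δ → dist (φ x) (φ y) < ε)
    (hφG : ∀ k ∈ G ∪ {id}, φ ∘ k ∈ G ∪ {id})
    (hc : EpsChain G δ (h ∘ φ) a b) : EpsChain G ε h (φ a) (φ b) := by
  obtain ⟨n, hn, y, ks, hy0, hyn, hstep⟩ := hc
  refine ⟨n, hn, φ ∘ y, fun i => φ ∘ ks i, by simp [hy0], by simp [hyn], fun i => ?_⟩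
  obtain ⟨hk, hdist⟩ := hstep i
  exact ⟨hφG _ hk, hφ _ _ hdist⟩

/-- If `G` is a semigroup of uniformly continuous self-maps of a metric space `(X, d)`
(not assumed abelian), then the set `CR(G)` of chain recurrent points for `G` is an
invariant subset of `X`. -/
theorem chainRecurrent_invariant_of_uniformContinuous {X : Type*} [MetricSpace X]
    (G : Set (X → X))
    (hucont : ∀ g ∈ G, UniformContinuous g)
    (hcomp : ∀ g ∈ G, ∀ h ∈ G, g ∘ h ∈ G) :
    ∀ g ∈ G, ∀ x ∈ {x | ChainRecurrent G x}, g x ∈ {x | ChainRecurrent G x} := by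
  intro g hg x hx ε hε h hh
  obtain ⟨δ, hδ, hgδ⟩ := Metric.uniformContinuous_iff.mp (hucont g hg) ε hε
  exact (hx δ hδ (h ∘ g) (hcomp h hh g hg)).map (fun _ _ hxy => hgδ hxy)
    (comp_mem_union_id hcomp hg)
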